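/- arXiv:1711.10822 — 6 statements merged into one kernel-verified Lean document; each statement's English description precedes it below -/
import Mathlib

section
/- Let α > 0 and β > 0 be real numbers, and for F > 0 define φ(F) = (∫₀^F x^α (1+x)^{-β} dx) / (∫₀^F x^{α-1} (1+x)^{-β} dx). Then φ is non-decreasing on (0,∞). -/
/-!
Write `w x = x ^ (α - 1) * (1 + x) ^ (-β)`, so that `φ F` is the mean of `x` on `(0, F)` for the
weight `w`. Enlarging the interval from `(0, F₁)` to `(0, F₂)` adds mass only at points `x ≥ F₁`,
while the old mean is at most `F₁`; hence the mean cannot decrease.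
-/

open intervalIntegral MeasureTheory Set

lemma div_le_add_div_add {N D ΔN ΔD t : ℝ} (hD : 0 < D) (hΔD : 0 ≤ ΔD)
    (hN : N ≤ t * D) (hΔN : t * ΔD ≤ ΔN) : N / D ≤ (N + ΔN) / (D + ΔD) := by
  rw [div_le_div_iff₀ hD (by positivity)]
  nlinarith

section WeightedMean

variable {w : ℝ → ℝ} {a b : ℝ}

lemma IntervalIntegrable.id_mul (h : IntervalIntegrable w volume a b) :
    IntervalIntegrable (fun x => x * w x) volume a b :=
  h.continuousOn_mul continuousOn_id

lemma integral_id_mul_le_mul_integral (hab : a ≤ b) (hw : ∀ x ∈ Ioo a b, 0 ≤ w x)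
    (hi : IntervalIntegrable w volume a b) :
    ∫ x in a..b, x * w x ≤ b * ∫ x in a..b, w x := by
  rw [← intervalIntegral.integral_const_mul]
  exact integral_mono_on_of_le_Ioo hab hi.id_mul
    (hi.const_mul b) fun x hx => mul_le_mul_of_nonneg_right hx.2.le (hw x hx)

lemma mul_integral_le_integral_id_mul (hab : a ≤ b) (hw : ∀ x ∈ Ioo a b, 0 ≤ w x)
    (hi : IntervalIntegrable w volume a b) :
    a * ∫ x in a..b, w x ≤ ∫ x in a..b, x * w x := by
  rw [← intervalIntegral.integral_const_mul]
  exact integral_mono_on_of_le_Ioo hab (hi.const_mul a)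
    hi.id_mul fun x hx => mul_le_mul_of_nonneg_right hx.1.le (hw x hx)

lemma monotoneOn_integral_id_mul_div_integral (hw : ∀ x ∈ Ioi a, 0 < w x)
    (hi : ∀ b ∈ Ioi a, IntervalIntegrable w volume a b) :
    MonotoneOn (fun b => (∫ x in a..b, x * w x) / ∫ x in a..b, w x) (Ioi a) := by
  intro b₁ hb₁ b₂ hb₂ hb
  have hi₁ := hi b₁ hb₁
  have hi₁₂ : IntervalIntegrable w volume b₁ b₂ := hi₁.symm.trans (hi b₂ hb₂)
  beta_reduce
  rw [← integral_add_adjacent_intervals hi₁ hi₁₂,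
    ← integral_add_adjacent_intervals hi₁.id_mul hi₁₂.id_mul]
  exact div_le_add_div_add
    (intervalIntegral_pos_of_pos_on hi₁ (fun x hx => hw x hx.1) hb₁)
    (integral_nonneg hb fun x hx => (hw x (lt_of_lt_of_le hb₁ hx.1)).le)
    (integral_id_mul_le_mul_integral hb₁.le (fun x hx => (hw x hx.1).le) hi₁)
    (mul_integral_le_integral_id_mul hb (fun x hx => (hw x (lt_trans hb₁ hx.1)).le) hi₁₂)

end WeightedMean

theorem stmt_1_general (α β : ℝ) (hα : 0 < α)
    (φ : ℝ → ℝ)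
    (hφ : ∀ F > 0, φ F =
      (∫ x in (0:ℝ)..F, x ^ α * (1 + x) ^ (-β)) /
      (∫ x in (0:ℝ)..F, x ^ (α - 1) * (1 + x) ^ (-β))) :
    ∀ F₁ F₂ : ℝ, 0 < F₁ → F₁ ≤ F₂ → φ F₁ ≤ φ F₂ := by
  intro F₁ F₂ hF₁ h12
  set w : ℝ → ℝ := fun x => x ^ (α - 1) * (1 + x) ^ (-β)
  have hw : ∀ x ∈ Ioi (0 : ℝ), 0 < w x := fun x (hx : 0 < x) => by positivity
  have hi : ∀ F ∈ Ioi (0 : ℝ), IntervalIntegrable w volume 0 F := fun F (hF : 0 < F) =>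
    (intervalIntegrable_rpow' (by linarith)).mul_continuousOn <|
      (continuousOn_const.add continuousOn_id).rpow_const fun x hx =>
        Or.inl (by
          rw [uIcc_of_le hF.le] at hx
          exact (show (0 : ℝ) < 1 + x by linarith [hx.1]).ne')
  have hφw : ∀ F > 0, φ F = (∫ x in (0:ℝ)..F, x * w x) / ∫ x in (0:ℝ)..F, w x := by
    intro F hF
    rw [hφ F hF]
    congr 1
    refine integral_congr fun x hx => ?_
    rw [uIcc_of_le hF.le] at hx
    rw [← mul_assoc, ← Real.rpow_one_add' hx.1 (by linarith), add_sub_cancel]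
  rw [hφw F₁ hF₁, hφw F₂ (hF₁.trans_le h12)]
  exact monotoneOn_integral_id_mul_div_integral hw hi hF₁ (mem_Ioi.2 (hF₁.trans_le h12)) h12

theorem stmt_1 (α β : ℝ) (hα : 0 < α) (hβ : 0 < β)
    (φ : ℝ → ℝ)
    (hφ : ∀ F > 0, φ F =
      (∫ x in (0:ℝ)..F, x ^ α * (1 + x) ^ (-β)) /
      (∫ x in (0:ℝ)..F, x ^ (α - 1) * (1 + x) ^ (-β))) :
    ∀ F₁ F₂ : ℝ, 0 < F₁ → F₁ ≤ F₂ → φ F₁ ≤ φ F₂ :=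
  stmt_1_general α β hα φ hφ
end

section
/- Let α > 0, β > 0 with β > α + 2, and define φ(F) = (∫₀^F x^α (1+x)^{-β} dx)/(∫₀^F x^{α-1}(1+x)^{-β} dx) for F > 0. Then φ(F) ≤ α/(β - α - 2) for all F > 0. -/
/-! Integrating the derivative of `x ^ α * (1 + x) ^ (1 - β)` over `[0, F]` gives
`α D(F) - (β - α - 1) N(F) = F ^ α (1 + F) ^ (1 - β) ≥ 0`, where `N` and `D` are the numerator and
denominator of `φ`. Hence `φ(F) ≤ α / (β - α - 1)`, which is below `α / (β - α - 2)`. -/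

open MeasureTheory intervalIntegral Set

lemma continuousOn_one_add_rpow_Icc (q F : ℝ) :
    ContinuousOn (fun x : ℝ => (1 + x) ^ q) (Icc 0 F) :=
  ContinuousOn.rpow_const (by fun_prop) fun x hx => Or.inl (by linarith [hx.1])

lemma intervalIntegrable_rpow_mul_one_add_rpow {p : ℝ} (hp : -1 < p) (q : ℝ) {F : ℝ}
    (hF : 0 ≤ F) : IntervalIntegrable (fun x : ℝ => x ^ p * (1 + x) ^ q) volume 0 F :=
  (intervalIntegrable_rpow' hp).mul_continuousOn
    (by simpa only [uIcc_of_le hF] using continuousOn_one_add_rpow_Icc q F)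

lemma hasDerivAt_rpow_mul_one_add_rpow (a b : ℝ) {x : ℝ} (hx : 0 < x) :
    HasDerivAt (fun x : ℝ => x ^ a * (1 + x) ^ (1 - b))
      (a * (x ^ (a - 1) * (1 + x) ^ (-b)) - (b - a - 1) * (x ^ a * (1 + x) ^ (-b))) x := by
  have h1x : (0 : ℝ) < 1 + x := by linarith
  have hpow : HasDerivAt (fun x : ℝ => (1 + x) ^ (1 - b)) ((1 - b) * (1 + x) ^ (-b)) x := by
    convert ((hasDerivAt_id' x).const_add 1).rpow_const (p := 1 - b) (Or.inl h1x.ne') using 1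
    rw [sub_sub_cancel_left, one_mul]
  refine ((Real.hasDerivAt_rpow_const (Or.inl hx.ne')).mul hpow).congr_deriv ?_
  have hb : (1 + x) ^ (1 - b) = (1 + x) * (1 + x) ^ (-b) := by
    rw [sub_eq_add_neg, Real.rpow_add h1x, Real.rpow_one]
  have ha : x ^ a = x ^ (a - 1) * x := by
    rw [← Real.rpow_add_one hx.ne', sub_add_cancel]
  rw [hb, ha]
  ring

lemma integral_rpow_mul_one_add_rpow_recurrence {a : ℝ} (ha : 0 < a) (b : ℝ) {F : ℝ}
    (hF : 0 ≤ F) :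
    a * (∫ x in (0:ℝ)..F, x ^ (a - 1) * (1 + x) ^ (-b)) -
        (b - a - 1) * (∫ x in (0:ℝ)..F, x ^ a * (1 + x) ^ (-b)) =
      F ^ a * (1 + F) ^ (1 - b) := by
  have hD := (intervalIntegrable_rpow_mul_one_add_rpow (p := a - 1) (by linarith) (-b)
    hF).const_mul a
  have hN := (intervalIntegrable_rpow_mul_one_add_rpow (p := a) (by linarith) (-b)
    hF).const_mul (b - a - 1)
  have hcont : ContinuousOn (fun x : ℝ => x ^ a * (1 + x) ^ (1 - b)) (Icc 0 F) :=
    (Real.continuous_rpow_const ha.le).continuousOn.mul (continuousOn_one_add_rpow_Icc _ F)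
  rw [← intervalIntegral.integral_const_mul, ← intervalIntegral.integral_const_mul,
    ← integral_sub hD hN,
    integral_eq_sub_of_hasDeriv_right_of_le hF hcont
      (fun x hx => (hasDerivAt_rpow_mul_one_add_rpow a b hx.1).hasDerivWithinAt) (hD.sub hN),
    Real.zero_rpow ha.ne', zero_mul, sub_zero]

theorem stmt_3_general (α β : ℝ) (hα : 0 < α) (hβα : β > α + 2)
    (F : ℝ) (hF : 0 < F) :
    (∫ x in (0:ℝ)..F, x ^ α * (1 + x) ^ (-β)) /
      (∫ x in (0:ℝ)..F, x ^ (α - 1) * (1 + x) ^ (-β)) ≤ α / (β - α - 2) := by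
  set N := ∫ x in (0:ℝ)..F, x ^ α * (1 + x) ^ (-β)
  set D := ∫ x in (0:ℝ)..F, x ^ (α - 1) * (1 + x) ^ (-β)
  have hD : 0 < D := intervalIntegral_pos_of_pos_on
    (intervalIntegrable_rpow_mul_one_add_rpow (by linarith) (-β) hF.le)
    (fun x hx => by have := hx.1; positivity) hF
  have hND : (β - α - 1) * N ≤ α * D := by
    have := integral_rpow_mul_one_add_rpow_recurrence hα β hF.le
    have : 0 ≤ F ^ α * (1 + F) ^ (1 - β) := by positivity
    linarith
  calc N / D ≤ α / (β - α - 1) := by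
        rw [div_le_div_iff₀ hD (by linarith)]; linarith
    _ ≤ α / (β - α - 2) := div_le_div_of_nonneg_left hα.le (by linarith) (by linarith)

theorem stmt_3 (α β : ℝ) (hα : 0 < α) (hβ : 0 < β) (hβα : β > α + 2)
    (F : ℝ) (hF : 0 < F) :
    (∫ x in (0:ℝ)..F, x ^ α * (1 + x) ^ (-β)) /
      (∫ x in (0:ℝ)..F, x ^ (α - 1) * (1 + x) ^ (-β)) ≤ α / (β - α - 2) :=
  stmt_3_general α β hα hβα F hF
end

section
/- Let S be a random variable with S/σ² ~ χ²_n (chi-squared with n degrees of freedom, σ > 0), and let g : (0,∞) → ℝ be continuously differentiable with E|S g(S)| < ∞ and E|S g'(S)| < ∞. Then E[S g(S)] = σ² E[n g(S) + 2 S g'(S)]. -/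
/-!
The density `p` of `Γ(a, r)` satisfies `(x p)' = (a - r x) p` on `(0, ∞)`, so integrating
`(x p h)' = (a - r x) p h + x p h'` over `(0, ∞)` gives `r E[X h] = a E[h] + E[X h']` as soon as
the boundary terms of `x p h` vanish. At `∞` this holds because `x p h` and its derivative are
integrable. At `0⁺` the integrability of the derivative gives a limit, and that limit is `0`
because `(x p h) / x = p h` is integrable while `1 / x` is not. The chi-square law of `S / σ²` is
`Γ(n/2, 1/2)`, and the scaling `v ↦ σ² v` turns the identity into the claimed one.
-/

open MeasureTheory ProbabilityTheory
open Set Filter Topology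

section ImproperFTC

variable {E : Type*} [NormedAddCommGroup E] [NormedSpace ℝ E] [CompleteSpace E]
  {f f' : ℝ → E} {a b : ℝ}

theorem exists_tendsto_nhdsGT_of_hasDerivAt_of_integrableOn (hab : a < b)
    (hderiv : ∀ x ∈ Ioc a b, HasDerivAt f (f' x) x) (f'int : IntegrableOn f' (Ioc a b)) :
    ∃ m, Tendsto f (𝓝[>] a) (𝓝 m) := by
  have hprim : ContinuousWithinAt (fun x => ∫ t in x..b, f' t) (Ioc a b) a := by
    have hcont := intervalIntegral.continuousOn_primitive_interval_left (a := a) (b := b)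
      (f := f') (μ := volume) (by rwa [uIcc_of_le hab.le, integrableOn_Icc_iff_integrableOn_Ioc])
    rw [uIcc_of_le hab.le] at hcont
    exact (hcont a (left_mem_Icc.2 hab.le)).mono Ioc_subset_Icc_self
  refine ⟨f b - ∫ t in a..b, f' t, ?_⟩
  rw [← nhdsWithin_Ioc_eq_nhdsGT hab]
  refine ((tendsto_const_nhds (x := f b)).sub hprim).congr' ?_
  filter_upwards [self_mem_nhdsWithin] with x hx
  rw [intervalIntegral.integral_eq_sub_of_hasDerivAt, sub_sub_cancel]
  · intro y hy
    rw [uIcc_of_le hx.2] at hy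
    exact hderiv y ⟨hx.1.trans_le hy.1, hy.2⟩
  · rw [intervalIntegrable_iff_integrableOn_Ioc_of_le hx.2]
    exact f'int.mono_set (Ioc_subset_Ioc_left hx.1.le)

theorem integral_Ioi_of_hasDerivAt_of_tendsto_nhdsGT {m m' : E}
    (hderiv : ∀ x ∈ Ioi a, HasDerivAt f (f' x) x) (f'int : IntegrableOn f' (Ioi a))
    (hbot : Tendsto f (𝓝[>] a) (𝓝 m)) (htop : Tendsto f atTop (𝓝 m')) :
    ∫ x in Ioi a, f' x = m' - m := by
  have hupd : ∀ x ∈ Ioi a, Function.update f a m =ᶠ[𝓝 x] f := fun x hx =>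
    (eventually_ne_nhds hx.ne').mono fun y hy => Function.update_of_ne hy _ _
  have := integral_Ioi_of_hasDerivAt_of_tendsto (f := Function.update f a m)
    (continuousWithinAt_update_same.2
      (hbot.mono_left (nhdsWithin_mono _ fun x hx => lt_of_le_of_ne hx.1 (Ne.symm hx.2))))
    (fun x hx => (hderiv x hx).congr_of_eventuallyEq (hupd x hx)) f'int
    (htop.congr' ((eventually_gt_atTop a).mono fun y hy => (Function.update_of_ne hy.ne' _ _).symm))
  rwa [Function.update_self] at this

end ImproperFTC

theorem eq_zero_of_tendsto_nhdsGT_zero_of_integrableAtFilter {f : ℝ → ℝ} {m : ℝ}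
    (hf : Tendsto f (𝓝[>] 0) (𝓝 m))
    (hint : IntegrableAtFilter (fun x => f x / x) (𝓝[>] 0)) :
    m = 0 := by
  by_contra hm
  obtain ⟨s, hs, hsint⟩ := hint
  have hbound : ∀ᶠ x in 𝓝[>] 0, |m| / 2 < |f x| :=
    (continuous_abs.tendsto m).comp hf |>.eventually_const_lt (half_lt_self (abs_pos.2 hm))
  refine not_integrableOn_of_tendsto_norm_atTop_of_deriv_isBigO_filter (f := Real.log)
    (𝓝[>] 0) hs ?_ ?_ ?_ hsint
  · filter_upwards [self_mem_nhdsWithin] with x hx using Real.differentiableAt_log hx.ne'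
  · exact tendsto_abs_atBot_atTop.comp Real.tendsto_log_nhdsGT_zero
  · rw [Real.deriv_log']
    refine Asymptotics.IsBigO.of_bound (2 / |m|) ?_
    filter_upwards [self_mem_nhdsWithin, hbound] with x (hx : 0 < x) hx'
    rw [Real.norm_eq_abs, Real.norm_eq_abs, abs_div, abs_inv, abs_of_pos hx,
      div_mul_div_comm, le_div_iff₀ (by positivity)]
    field_simp
    linarith

namespace ProbabilityTheory

theorem gammaMeasure_eq_withDensity_restrict_Ioi (a r : ℝ) :
    gammaMeasure a r = (volume.restrict (Ioi 0)).withDensity (gammaPDF a r) := by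
  have hind : (Ici (0 : ℝ)).indicator (gammaPDF a r) = gammaPDF a r := by
    refine indicator_eq_self.2 fun x hx => ?_
    by_contra hx0
    exact hx (gammaPDF_of_neg (not_le.1 hx0))
  rw [gammaMeasure, restrict_Ioi_eq_restrict_Ici, ← withDensity_indicator measurableSet_Ici, hind]

theorem integral_gammaMeasure {a r : ℝ} (ha : 0 < a) (hr : 0 < r) (f : ℝ → ℝ) :
    ∫ x, f x ∂gammaMeasure a r = ∫ x in Ioi 0, gammaPDFReal a r x * f x := by
  rw [gammaMeasure_eq_withDensity_restrict_Ioi, integral_withDensity_eq_integral_toReal_smul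
    (f := gammaPDF a r) (measurable_gammaPDFReal a r).ennreal_ofReal
    (ae_of_all _ fun _ => ENNReal.ofReal_lt_top)]
  simp only [gammaPDF, ENNReal.toReal_ofReal (gammaPDFReal_nonneg ha hr _), smul_eq_mul]

theorem integrable_gammaMeasure_iff {a r : ℝ} (ha : 0 < a) (hr : 0 < r) {f : ℝ → ℝ} :
    Integrable f (gammaMeasure a r) ↔
      IntegrableOn (fun x => gammaPDFReal a r x * f x) (Ioi 0) := by
  rw [gammaMeasure_eq_withDensity_restrict_Ioi, integrable_withDensity_iff_integrable_smul'
    (f := gammaPDF a r) (measurable_gammaPDFReal a r).ennreal_ofReal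
    (ae_of_all _ fun _ => ENNReal.ofReal_lt_top)]
  simp only [gammaPDF, ENNReal.toReal_ofReal (gammaPDFReal_nonneg ha hr _), smul_eq_mul,
    IntegrableOn]

theorem hasDerivAt_mul_gammaPDFReal (a r : ℝ) {x : ℝ} (hx : 0 < x) :
    HasDerivAt (fun v => v * gammaPDFReal a r v) ((a - r * x) * gammaPDFReal a r x) x := by
  have hpow : HasDerivAt (fun v => v ^ a) (a * x ^ (a - 1)) x :=
    Real.hasDerivAt_rpow_const (Or.inl hx.ne')
  have hexp : HasDerivAt (fun v => Real.exp (-(r * v))) (Real.exp (-(r * x)) * -r) x := by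
    simpa using ((hasDerivAt_id x).const_mul r).neg.exp
  have hprod := (hpow.mul hexp).const_mul (r ^ a / Real.Gamma a)
  refine (hprod.congr_deriv ?_).congr_of_eventuallyEq ?_
  · rw [gammaPDFReal, if_pos hx.le, Real.rpow_sub_one hx.ne']
    field_simp
    ring
  · filter_upwards [lt_mem_nhds hx] with v hv
    rw [gammaPDFReal, if_pos hv.le, Real.rpow_sub_one hv.ne', Pi.mul_apply]
    field_simp

theorem gammaMeasure_stein_identity {a r : ℝ} (ha : 0 < a) (hr : 0 < r) {h h' : ℝ → ℝ}
    (hderiv : ∀ x ∈ Ioi 0, HasDerivAt h (h' x) x) (hint : Integrable h (gammaMeasure a r))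
    (hint_mul : Integrable (fun x => x * h x) (gammaMeasure a r))
    (hint_mul_deriv : Integrable (fun x => x * h' x) (gammaMeasure a r)) :
    r * ∫ x, x * h x ∂gammaMeasure a r
      = a * ∫ x, h x ∂gammaMeasure a r + ∫ x, x * h' x ∂gammaMeasure a r := by
  rw [integrable_gammaMeasure_iff ha hr] at hint hint_mul hint_mul_deriv
  simp only [integral_gammaMeasure ha hr]
  set p := gammaPDFReal a r
  set F' := fun x => a * (p x * h x) - r * (p x * (x * h x)) + p x * (x * h' x)
  have hF : ∀ x ∈ Ioi 0, HasDerivAt (fun v => v * p v * h v) (F' x) x := fun x hx =>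
    ((hasDerivAt_mul_gammaPDFReal a r hx).mul (hderiv x hx)).congr_deriv (by simp only [F']; ring)
  have hint_sub : IntegrableOn (fun x => a * (p x * h x) - r * (p x * (x * h x))) (Ioi 0) :=
    (hint.const_mul a).sub (hint_mul.const_mul r)
  have hF'int : IntegrableOn F' (Ioi 0) := hint_sub.add hint_mul_deriv
  have hFint : IntegrableOn (fun v => v * p v * h v) (Ioi 0) :=
    hint_mul.congr_fun (fun x _ => by ring) measurableSet_Ioi
  obtain ⟨m, hbot⟩ := exists_tendsto_nhdsGT_of_hasDerivAt_of_integrableOn zero_lt_one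
    (fun x hx => hF x hx.1) (hF'int.mono_set Ioc_subset_Ioi_self)
  have hm : m = 0 := eq_zero_of_tendsto_nhdsGT_zero_of_integrableAtFilter hbot
    ⟨Ioi 0, self_mem_nhdsWithin,
      hint.congr_fun (fun x (hx : 0 < x) => by field_simp) measurableSet_Ioi⟩
  have hFTC := integral_Ioi_of_hasDerivAt_of_tendsto_nhdsGT hF hF'int (hm ▸ hbot)
    (tendsto_zero_of_hasDerivAt_of_integrableOn_Ioi hF hF'int hFint)
  rw [sub_zero, integral_add hint_sub hint_mul_deriv,
    integral_sub (hint.const_mul a) (hint_mul.const_mul r), integral_const_mul,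
    integral_const_mul] at hFTC
  linear_combination -hFTC

theorem map_mul_left_gammaMeasure_stein_identity {a r c : ℝ} (ha : 0 < a) (hr : 0 < r)
    (hc : 0 < c) {h h' : ℝ → ℝ} (hderiv : ∀ x ∈ Ioi 0, HasDerivAt h (h' x) x)
    (hint : Integrable h ((gammaMeasure a r).map (c * ·)))
    (hint_mul : Integrable (fun x => x * h x) ((gammaMeasure a r).map (c * ·)))
    (hint_mul_deriv : Integrable (fun x => x * h' x) ((gammaMeasure a r).map (c * ·))) :
    r * ∫ x, x * h x ∂(gammaMeasure a r).map (c * ·)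
      = c * (a * ∫ x, h x ∂(gammaMeasure a r).map (c * ·)
        + ∫ x, x * h' x ∂(gammaMeasure a r).map (c * ·)) := by
  have hscale : MeasurableEmbedding (c * ·) := (Homeomorph.mulLeft₀ c hc.ne').measurableEmbedding
  rw [hscale.integrable_map_iff, Function.comp_def] at hint hint_mul hint_mul_deriv
  simp only [hscale.integral_map]
  have hderiv_comp : ∀ x ∈ Ioi (0 : ℝ), HasDerivAt (fun v => h (c * v)) (c * h' (c * x)) x :=
    fun x hx => ((hderiv _ (mul_pos hc hx)).comp x ((hasDerivAt_id x).const_mul c)).congr_deriv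
      (by simp [mul_comm])
  have hstein := gammaMeasure_stein_identity ha hr hderiv_comp hint
    ((hint_mul.const_mul c⁻¹).congr (ae_of_all _ fun x => by field_simp))
    (hint_mul_deriv.congr (ae_of_all _ fun x => by ring))
  simp only [mul_assoc c, integral_const_mul, mul_left_comm _ c] at hstein ⊢
  linear_combination c * hstein

end ProbabilityTheory

theorem stmt_7 (n : ℕ) (hn : 1 ≤ n) (σ : ℝ) (hσ : 0 < σ) (g : ℝ → ℝ)
    (hg : ContDiffOn ℝ 1 g (Set.Ioi 0))
    -- the law of `S`, where `S / σ²` is chi-squared with `n` degrees of freedom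
    (ν : Measure ℝ)
    (hν : ν = (gammaMeasure ((n : ℝ) / 2) (1 / 2)).map (fun v => σ ^ 2 * v))
    (hint1 : Integrable (fun s => s * g s) ν)
    (hint2 : Integrable (fun s => s * deriv g s) ν)
    (hint3 : Integrable g ν) :
    ∫ s, s * g s ∂ν = σ ^ 2 * ∫ s, ((n : ℝ) * g s + 2 * s * deriv g s) ∂ν := by
  have hderiv : ∀ x ∈ Ioi (0 : ℝ), HasDerivAt g (deriv g x) x := fun x hx =>
    ((hg.differentiableOn one_ne_zero).differentiableAt (Ioi_mem_nhds hx)).hasDerivAt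
  subst hν
  have hstein := map_mul_left_gammaMeasure_stein_identity (by positivity) one_half_pos
    (by positivity) hderiv hint3 hint1 hint2
  simp only [mul_assoc (2 : ℝ)]
  rw [integral_add (hint3.const_mul _) (hint2.const_mul 2), integral_const_mul,
    integral_const_mul]
  linear_combination 2 * hstein
end

section
/- Let h : (0,∞)³ → (0,∞) be given by h(x,y,v) = x^α y^β v^γ exp(-v(x+y+1)/2) with α, β > 0 and γ > 0, and fix G > 0, S ≥ 0, L ≥ 0. Define Φ(F) = (∫₀^F ∫₀^G ∫_{LS}^∞ x·h(x,y,v) dv dy dx)/(∫₀^F ∫₀^G ∫_{LS}^∞ h(x,y,v) dv dy dx) for F > 0. Then Φ is non-decreasing in F. -/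
/-!
Pulling `x` and `x ^ α` out of the inner integrals writes `Φ F` as the centre of mass
`∫₀^F x w(x) dx / ∫₀^F w(x) dx` of the weight
`w(x) = x ^ α · ∫₀^G y ^ β ∫_{LS}^∞ v ^ γ e^{-v(x+y+1)/2} dv dy`, which is positive on `(0, ∞)`.
Passing from `[0, F₁]` to `[0, F₂]` only adds mass at points `x ≥ F₁ ≥ Φ F₁`, so the centre of
mass cannot move left. The weight is integrable because `x ^ α` is integrable near `0` and the
double integral is antitone, hence bounded and measurable, in `x`.
-/

open MeasureTheory Set Real

noncomputable def weightedMean (w : ℝ → ℝ) (a b : ℝ) : ℝ :=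
  (∫ x in a..b, x * w x) / ∫ x in a..b, w x

theorem weightedMean_le_of_le {w : ℝ → ℝ} {a b₁ b₂ : ℝ} (hab₁ : a ≤ b₁) (hb₁₂ : b₁ ≤ b₂)
    (hw : IntervalIntegrable w volume a b₂) (hw_nonneg : ∀ x ∈ Icc a b₂, 0 ≤ w x)
    (hpos : 0 < ∫ x in a..b₁, w x) :
    weightedMean w a b₁ ≤ weightedMean w a b₂ := by
  have hb₁ : b₁ ∈ uIcc a b₂ := mem_uIcc_of_le hab₁ hb₁₂
  have hw₁ : IntervalIntegrable w volume a b₁ :=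
    hw.mono_set (uIcc_subset_uIcc left_mem_uIcc hb₁)
  have hw₁₂ : IntervalIntegrable w volume b₁ b₂ :=
    hw.mono_set (uIcc_subset_uIcc hb₁ right_mem_uIcc)
  have hxw₁ : IntervalIntegrable (fun x => x * w x) volume a b₁ :=
    hw₁.continuousOn_mul continuousOn_id
  have hxw₁₂ : IntervalIntegrable (fun x => x * w x) volume b₁ b₂ :=
    hw₁₂.continuousOn_mul continuousOn_id
  set D := ∫ x in a..b₁, w x
  set N := ∫ x in a..b₁, x * w x
  set B := ∫ x in b₁..b₂, w x
  set A := ∫ x in b₁..b₂, x * w x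
  have hN : N ≤ b₁ * D := by
    rw [← intervalIntegral.integral_const_mul]
    exact intervalIntegral.integral_mono_on hab₁ hxw₁ (hw₁.const_mul b₁) fun x hx =>
      mul_le_mul_of_nonneg_right hx.2 (hw_nonneg x ⟨hx.1, hx.2.trans hb₁₂⟩)
  have hA : b₁ * B ≤ A := by
    rw [← intervalIntegral.integral_const_mul]
    exact intervalIntegral.integral_mono_on hb₁₂ (hw₁₂.const_mul b₁) hxw₁₂ fun x hx =>
      mul_le_mul_of_nonneg_right hx.1 (hw_nonneg x ⟨hab₁.trans hx.1, hx.2⟩)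
  have hB : 0 ≤ B :=
    intervalIntegral.integral_nonneg hb₁₂ fun x hx => hw_nonneg x ⟨hab₁.trans hx.1, hx.2⟩
  unfold weightedMean
  rw [← intervalIntegral.integral_add_adjacent_intervals hw₁ hw₁₂,
    ← intervalIntegral.integral_add_adjacent_intervals hxw₁ hxw₁₂,
    div_le_div_iff₀ hpos (by linarith)]
  -- the goal is `N * B ≤ A * D`, and `N * B ≤ b₁ * D * B ≤ A * D`
  nlinarith [mul_le_mul_of_nonneg_right hN hB, mul_le_mul_of_nonneg_right hA hpos.le]

theorem IntervalIntegrable.mul_antitoneOn {f g : ℝ → ℝ} {a b : ℝ} (hab : a ≤ b)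
    (hf : IntervalIntegrable f volume a b) (hg : AntitoneOn g (Icc a b)) :
    IntervalIntegrable (fun x => f x * g x) volume a b := by
  rw [intervalIntegrable_iff_integrableOn_Ioc_of_le hab] at hf ⊢
  refine hf.mul_bdd (c := max |g a| |g b|)
    (aemeasurable_restrict_of_antitoneOn measurableSet_Ioc
      (hg.mono Ioc_subset_Icc_self)).aestronglyMeasurable ?_
  filter_upwards [ae_restrict_mem measurableSet_Ioc] with x hx
  have hx' : x ∈ Icc a b := Ioc_subset_Icc_self hx
  rw [Real.norm_eq_abs, abs_le]
  constructor
  · have := hg hx' ⟨hab, le_rfl⟩ hx'.2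
    linarith [neg_abs_le (g b), le_max_right |g a| |g b|]
  · have := hg ⟨le_rfl, hab⟩ hx' hx'.1
    linarith [le_abs_self (g a), le_max_left |g a| |g b|]

noncomputable def laplaceTail (γ c s : ℝ) : ℝ := ∫ v in Ioi c, v ^ γ * exp (-s * v)

section LaplaceTail

variable {γ c : ℝ}

theorem integrableOn_rpow_mul_exp_neg_mul_Ioi (hγ : -1 < γ) (hc : 0 ≤ c) {s : ℝ}
    (hs : 0 < s) :
    IntegrableOn (fun v => v ^ γ * exp (-s * v)) (Ioi c) := by
  have h := integrableOn_rpow_mul_exp_neg_mul_rpow hγ one_pos hs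
  simp only [rpow_one] at h
  exact h.mono_set (Ioi_subset_Ioi hc)

theorem laplaceTail_pos (hγ : -1 < γ) (hc : 0 ≤ c) {s : ℝ} (hs : 0 < s) :
    0 < laplaceTail γ c s := by
  have hpos : ∀ v ∈ Ioi c, 0 < v ^ γ * exp (-s * v) := fun v hv =>
    mul_pos (rpow_pos_of_pos (hc.trans_lt hv) γ) (exp_pos _)
  rw [laplaceTail, setIntegral_pos_iff_support_of_nonneg_ae
    ((ae_restrict_mem measurableSet_Ioi).mono fun v hv => (hpos v hv).le)
    (integrableOn_rpow_mul_exp_neg_mul_Ioi hγ hc hs),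
    inter_eq_right.2 fun v hv => Function.mem_support.2 (hpos v hv).ne', volume_Ioi]
  exact ENNReal.zero_lt_top

theorem laplaceTail_antitoneOn (hγ : -1 < γ) (hc : 0 ≤ c) :
    AntitoneOn (laplaceTail γ c) (Ioi 0) := fun s₁ hs₁ s₂ hs₂ hs =>
  setIntegral_mono_on (integrableOn_rpow_mul_exp_neg_mul_Ioi hγ hc hs₂)
    (integrableOn_rpow_mul_exp_neg_mul_Ioi hγ hc hs₁) measurableSet_Ioi fun v hv =>
    mul_le_mul_of_nonneg_left
      (exp_le_exp.2 (by nlinarith [hc.trans_lt (mem_Ioi.1 hv)]))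
      (rpow_nonneg (hc.trans (le_of_lt hv)) γ)

end LaplaceTail

/-- For `h` as in the theorem, `∫₀^G ∫_c^∞ h x y v dv dy = x ^ α * yMarginal β γ c G x`
(with `c = L * S`). -/
noncomputable def yMarginal (β γ c G x : ℝ) : ℝ :=
  ∫ y in (0:ℝ)..G, y ^ β * laplaceTail γ c ((x + y + 1) / 2)

section YMarginal

variable {β γ c G : ℝ}

theorem intervalIntegrable_yMarginal_integrand (hβ : -1 < β) (hγ : -1 < γ) (hc : 0 ≤ c)
    (hG : 0 ≤ G) {x : ℝ} (hx : 0 ≤ x) :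
    IntervalIntegrable (fun y => y ^ β * laplaceTail γ c ((x + y + 1) / 2)) volume 0 G :=
  (intervalIntegral.intervalIntegrable_rpow' hβ).mul_antitoneOn hG
    fun y₁ hy₁ y₂ _ hy => laplaceTail_antitoneOn hγ hc
      (by simp only [mem_Ioi]; linarith [hy₁.1]) (by simp only [mem_Ioi]; linarith [hy₁.1])
      (by linarith)

theorem yMarginal_antitoneOn (hβ : -1 < β) (hγ : -1 < γ) (hc : 0 ≤ c) (hG : 0 ≤ G) :
    AntitoneOn (yMarginal β γ c G) (Ici 0) :=
  fun x₁ hx₁ x₂ hx₂ hx =>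
  intervalIntegral.integral_mono_on hG
    (intervalIntegrable_yMarginal_integrand hβ hγ hc hG hx₂)
    (intervalIntegrable_yMarginal_integrand hβ hγ hc hG hx₁) fun y hy =>
    mul_le_mul_of_nonneg_left
      (laplaceTail_antitoneOn hγ hc (by simp only [mem_Ioi]; linarith [hy.1, mem_Ici.1 hx₁])
        (by simp only [mem_Ioi]; linarith [hy.1, mem_Ici.1 hx₂]) (by linarith))
      (rpow_nonneg hy.1 β)

theorem yMarginal_pos (hβ : -1 < β) (hγ : -1 < γ) (hc : 0 ≤ c) (hG : 0 < G)
    {x : ℝ} (hx : 0 ≤ x) : 0 < yMarginal β γ c G x :=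
  intervalIntegral.intervalIntegral_pos_of_pos_on
    (intervalIntegrable_yMarginal_integrand hβ hγ hc hG.le hx)
    (fun y hy => mul_pos (rpow_pos_of_pos hy.1 β)
      (laplaceTail_pos hγ hc (by linarith [hy.1]))) hG

end YMarginal

theorem intervalIntegrable_rpow_mul_yMarginal {α β γ c G b : ℝ} (hα : -1 < α) (hβ : -1 < β)
    (hγ : -1 < γ) (hc : 0 ≤ c) (hG : 0 ≤ G) (hb : 0 ≤ b) :
    IntervalIntegrable (fun x => x ^ α * yMarginal β γ c G x) volume 0 b :=
  (intervalIntegral.intervalIntegrable_rpow' hα).mul_antitoneOn hb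
    ((yMarginal_antitoneOn hβ hγ hc hG).mono Icc_subset_Ici_self)

theorem stmt_9 (α β γ : ℝ) (hα : 0 < α) (hβ : 0 < β) (hγ : 0 < γ)
    (G S L : ℝ) (hG : 0 < G) (hS : 0 ≤ S) (hL : 0 ≤ L)
    (h : ℝ → ℝ → ℝ → ℝ)
    (hh : ∀ x y v, h x y v = x ^ α * y ^ β * v ^ γ * Real.exp (-v * (x + y + 1) / 2))
    (Φ : ℝ → ℝ)
    (hΦ : ∀ F > 0, Φ F =
      (∫ x in (0:ℝ)..F, ∫ y in (0:ℝ)..G, ∫ v in Ioi (L * S), x * h x y v) /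
      (∫ x in (0:ℝ)..F, ∫ y in (0:ℝ)..G, ∫ v in Ioi (L * S), h x y v)) :
    ∀ F₁ F₂ : ℝ, 0 < F₁ → F₁ ≤ F₂ → Φ F₁ ≤ Φ F₂ := by
  intro F₁ F₂ hF₁ hF₁₂
  have hα' : -1 < α := by linarith
  have hβ' : -1 < β := by linarith
  have hγ' : -1 < γ := by linarith
  have hc : 0 ≤ L * S := mul_nonneg hL hS
  set W := fun x => x ^ α * yMarginal β γ (L * S) G x
  have hh' : ∀ x y v,
      h x y v = x ^ α * (y ^ β * (v ^ γ * exp (-((x + y + 1) / 2) * v))) := by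
    intro x y v
    rw [hh, show -v * (x + y + 1) / 2 = -((x + y + 1) / 2) * v by ring]
    ring
  have hΦW : ∀ F > 0, Φ F = weightedMean W 0 F := by
    intro F hF
    simp only [hΦ F hF, hh', integral_const_mul, intervalIntegral.integral_const_mul]
    rfl
  rw [hΦW F₁ hF₁, hΦW F₂ (hF₁.trans_le hF₁₂)]
  refine weightedMean_le_of_le hF₁.le hF₁₂
    (intervalIntegrable_rpow_mul_yMarginal hα' hβ' hγ' hc hG.le (hF₁.le.trans hF₁₂))
    (fun x hx => mul_nonneg (rpow_nonneg hx.1 α) (yMarginal_pos hβ' hγ' hc hG hx.1).le) ?_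
  exact intervalIntegral.intervalIntegral_pos_of_pos_on
    (intervalIntegrable_rpow_mul_yMarginal hα' hβ' hγ' hc hG.le hF₁.le)
    (fun x hx => mul_pos (rpow_pos_of_pos hx.1 α) (yMarginal_pos hβ' hγ' hc hG hx.1.le)) hF₁
end

section
/- For reals x₂ > x₁ ≥ 0, y ≥ 0, and fixed β > 0, γ > 0, L ≥ 0, S > 0, G > 0, the function x ↦ (∫₀^G ∫_{LS}^∞ y^β v^γ e^{-v(x+y+1)/2} dv dy)/(∫_{LS}^∞ v^γ e^{-v(x+G+1)/2} dv) is non-increasing on [0,∞), provided G > 0 so the integrands are positive. -/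
/-!
Write `I(c) = ∫_{LS}^∞ v^γ e^{-vc/2} dv`, so that the function is
`x ↦ (∫₀^G y^β I(x+y+1) dy) / I(x+G+1)`. For `x₁ ≤ x₂` it therefore suffices that
`I(x₂+y+1) I(x₁+G+1) ≤ I(x₁+y+1) I(x₂+G+1)` for every `y ∈ [0, G]`, which is the log-convexity of
the Laplace transform `I`: the ratio `I(c + t) / I(c)` is non-decreasing in `c`. That in turn is
Chebyshev's covariance inequality, proved by symmetrising a double integral: against the weight
`v^γ e^{-vc/2}`, the kernel `e^{-vt/2}` is decreasing while the likelihood ratio `e^{-v(c₂-c₁)/2}`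
of two such weights is decreasing as well.
-/

open MeasureTheory Set

section Chebyshev

variable {α : Type*} [MeasurableSpace α] {μ : Measure α} [SFinite μ]

theorem integral_mul_mul_integral_le {p q h : α → ℝ} (hp : Integrable p μ)
    (hq : Integrable q μ) (hph : Integrable (fun u => p u * h u) μ)
    (hqh : Integrable (fun u => q u * h u) μ)
    (hsign : ∀ᵐ z ∂μ.prod μ, (p z.1 * q z.2 - p z.2 * q z.1) * (h z.1 - h z.2) ≤ 0) :
    (∫ u, p u * h u ∂μ) * ∫ u, q u ∂μ ≤ (∫ u, p u ∂μ) * ∫ u, q u * h u ∂μ := by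
  set D : α × α → ℝ := fun z => p z.1 * h z.1 * q z.2 - p z.1 * (q z.2 * h z.2)
  have hD : Integrable D (μ.prod μ) := (hph.mul_prod hq).sub (hp.mul_prod hqh)
  have hintD : ∫ z, D z ∂μ.prod μ =
      (∫ u, p u * h u ∂μ) * (∫ u, q u ∂μ) - (∫ u, p u ∂μ) * ∫ u, q u * h u ∂μ := by
    rw [integral_sub (hph.mul_prod hq) (hp.mul_prod hqh),
      integral_prod_mul (fun u => p u * h u) q, integral_prod_mul p (fun u => q u * h u)]
  have hswap : ∫ z, D z.swap ∂μ.prod μ = ∫ z, D z ∂μ.prod μ := integral_prod_swap D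
  -- `D z + D z.swap` is the integrand of `hsign`, and swapping the coordinates preserves `∫ D`.
  have hsym : ∫ z, (D z + D z.swap) ∂μ.prod μ ≤ 0 := by
    refine integral_nonpos_of_ae (hsign.mono fun z hz => ?_)
    simp only [D, Prod.fst_swap, Prod.snd_swap, Pi.zero_apply]
    linarith
  rw [integral_add (g := fun z : α × α => D z.swap) hD hD.swap, hswap] at hsym
  linarith

end Chebyshev

theorem Monotone.map_sub_mul_map_sub_nonpos {R S : Type*} [Ring R] [LinearOrder R]
    [IsStrictOrderedRing R] [Ring S] [LinearOrder S] [IsStrictOrderedRing S] {f : R → S}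
    (hf : Monotone f) {x y x' y' : R} (h : (x - y) * (x' - y') ≤ 0) :
    (f x - f y) * (f x' - f y') ≤ 0 := by
  rcases mul_nonpos_iff.1 h with ⟨h₁, h₂⟩ | ⟨h₁, h₂⟩
  · exact mul_nonpos_of_nonneg_of_nonpos (sub_nonneg.2 (hf (sub_nonneg.1 h₁)))
      (sub_nonpos.2 (hf (sub_nonpos.1 h₂)))
  · exact mul_nonpos_of_nonpos_of_nonneg (sub_nonpos.2 (hf (sub_nonpos.1 h₁)))
      (sub_nonneg.2 (hf (sub_nonneg.1 h₂)))

noncomputable def tailExpIntegral (a γ c : ℝ) : ℝ :=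
  ∫ v in Ioi a, v ^ γ * Real.exp (-v * c / 2)

section TailExpIntegral

variable {a γ : ℝ}

theorem integrableOn_rpow_mul_exp_neg_mul_div_two (ha : 0 ≤ a) (hγ : -1 < γ) {c : ℝ}
    (hc : 0 < c) : IntegrableOn (fun v : ℝ => v ^ γ * Real.exp (-v * c / 2)) (Ioi a) := by
  have h₀ : IntegrableOn (fun v : ℝ => v ^ γ * Real.exp (-(c / 2) * v ^ (1 : ℝ))) (Ioi 0) :=
    integrableOn_rpow_mul_exp_neg_mul_rpow hγ zero_lt_one (by positivity)
  refine (h₀.congr_fun (fun v _ => ?_) measurableSet_Ioi).mono_set (Ioi_subset_Ioi ha)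
  rw [Real.rpow_one]
  ring_nf

theorem tailExpIntegral_pos (ha : 0 ≤ a) (hγ : -1 < γ) {c : ℝ} (hc : 0 < c) :
    0 < tailExpIntegral a γ c := by
  have hpos : ∀ v ∈ Ioi a, 0 < v ^ γ * Real.exp (-v * c / 2) := fun v hv => by
    have : 0 < v := ha.trans_lt hv
    positivity
  refine (setIntegral_pos_iff_support_of_nonneg_ae ?_
    (integrableOn_rpow_mul_exp_neg_mul_div_two ha hγ hc)).2 ?_
  · filter_upwards [ae_restrict_mem measurableSet_Ioi] with v hv using (hpos v hv).le
  · have hsupp : Ioi a ⊆ Function.support fun v => v ^ γ * Real.exp (-v * c / 2) :=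
      fun v hv => (hpos v hv).ne'
    rw [inter_eq_right.2 hsupp, Real.volume_Ioi]
    exact ENNReal.zero_lt_top

theorem antitoneOn_tailExpIntegral (ha : 0 ≤ a) (hγ : -1 < γ) :
    AntitoneOn (tailExpIntegral a γ) (Ioi 0) := by
  intro c₁ hc₁ c₂ hc₂ hc
  refine setIntegral_mono_on (integrableOn_rpow_mul_exp_neg_mul_div_two ha hγ hc₂)
    (integrableOn_rpow_mul_exp_neg_mul_div_two ha hγ hc₁) measurableSet_Ioi fun v hv => ?_
  have : 0 < v := ha.trans_lt hv
  exact mul_le_mul_of_nonneg_left (Real.exp_le_exp.2 (by nlinarith)) (by positivity)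

theorem tailExpIntegral_add_mul_tailExpIntegral_le (ha : 0 ≤ a) (hγ : -1 < γ) {c₁ c₂ t : ℝ} (hc₁ : 0 < c₁)
    (hc : c₁ ≤ c₂) (ht : 0 ≤ t) :
    tailExpIntegral a γ (c₁ + t) * tailExpIntegral a γ c₂ ≤
      tailExpIntegral a γ c₁ * tailExpIntegral a γ (c₂ + t) := by
  set F : ℝ → ℝ → ℝ := fun c v => v ^ γ * Real.exp (-v * c / 2)
  set h : ℝ → ℝ := fun v => Real.exp (-v * t / 2)
  have hFh : ∀ c, (fun v => F c v * h v) = F (c + t) := fun c => by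
    funext v
    simp only [F, h, mul_assoc, ← Real.exp_add]
    ring_nf
  have hint : ∀ {c}, 0 < c → IntegrableOn (F c) (Ioi a) :=
    integrableOn_rpow_mul_exp_neg_mul_div_two ha hγ
  have hsign : ∀ᵐ z ∂(volume.restrict (Ioi a)).prod (volume.restrict (Ioi a)),
      (F c₁ z.1 * F c₂ z.2 - F c₁ z.2 * F c₂ z.1) * (h z.1 - h z.2) ≤ 0 := by
    rw [Measure.prod_restrict]
    filter_upwards [ae_restrict_mem (measurableSet_Ioi.prod measurableSet_Ioi)]
      with ⟨u, v⟩ ⟨hu, hv⟩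
    have hu : 0 < u := ha.trans_lt hu
    have hv : 0 < v := ha.trans_lt hv
    have hfactor : (F c₁ u * F c₂ v - F c₁ v * F c₂ u) * (h u - h v) = u ^ γ * v ^ γ *
        ((Real.exp (-u * c₁ / 2 + -v * c₂ / 2) - Real.exp (-v * c₁ / 2 + -u * c₂ / 2)) *
          (Real.exp (-u * t / 2) - Real.exp (-v * t / 2))) := by
      simp only [F, h, Real.exp_add]
      ring
    rw [hfactor]
    refine mul_nonpos_of_nonneg_of_nonpos (by positivity)
      (Real.exp_monotone.map_sub_mul_map_sub_nonpos ?_)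
    nlinarith [mul_nonneg (mul_nonneg (sub_nonneg.2 hc) ht) (sq_nonneg (u - v))]
  have key := integral_mul_mul_integral_le (hint hc₁) (hint (hc₁.trans_le hc))
    ((hFh c₁).symm ▸ hint (by linarith)) ((hFh c₂).symm ▸ hint (by linarith)) hsign
  rwa [hFh, hFh] at key

end TailExpIntegral

theorem setIntegral_const_mul_rpow_mul_exp (a γ b c : ℝ) :
    ∫ v in Ioi a, b * v ^ γ * Real.exp (-v * c / 2) = b * tailExpIntegral a γ c := by
  simp_rw [mul_assoc]
  exact integral_const_mul _ _

theorem antitoneOn_intervalIntegral_mul_tailExpIntegral_div {a γ G : ℝ} {w : ℝ → ℝ}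
    (ha : 0 ≤ a) (hγ : -1 < γ) (hG : 0 ≤ G) (hw : ContinuousOn w (uIcc 0 G))
    (hw₀ : ∀ y ∈ Icc 0 G, 0 ≤ w y) :
    AntitoneOn (fun x => (∫ y in (0 : ℝ)..G, w y * tailExpIntegral a γ (x + y + 1)) /
      tailExpIntegral a γ (x + G + 1)) (Ici 0) := by
  have hI : ∀ x : ℝ, 0 ≤ x → ∀ C : ℝ,
      IntervalIntegrable (fun y => w y * tailExpIntegral a γ (x + y + 1) * C) volume 0 G := by
    intro x hx C
    have hanti : AntitoneOn (fun y => tailExpIntegral a γ (x + y + 1)) (uIcc 0 G) := by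
      intro y₁ hy₁ y₂ _ hy
      rw [uIcc_of_le hG] at hy₁
      exact antitoneOn_tailExpIntegral ha hγ (mem_Ioi.2 (by linarith [hy₁.1]))
        (mem_Ioi.2 (by linarith [hy₁.1])) (by linarith)
    exact (hanti.intervalIntegrable.continuousOn_mul hw).mul_const C
  intro x₁ hx₁ x₂ hx₂ hx
  have hD : ∀ x : ℝ, 0 ≤ x → 0 < tailExpIntegral a γ (x + G + 1) := fun x hx =>
    tailExpIntegral_pos ha hγ (by linarith)
  dsimp only
  rw [div_le_div_iff₀ (hD x₂ hx₂) (hD x₁ hx₁), ← intervalIntegral.integral_mul_const,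
    ← intervalIntegral.integral_mul_const]
  refine intervalIntegral.integral_mono_on hG (hI x₂ hx₂ _) (hI x₁ hx₁ _) fun y hy => ?_
  simp only [mul_assoc]
  refine mul_le_mul_of_nonneg_left ?_ (hw₀ y hy)
  have key := tailExpIntegral_add_mul_tailExpIntegral_le ha hγ (c₁ := x₁ + y + 1) (c₂ := x₁ + G + 1)
    (t := x₂ - x₁) (by linarith [hy.1, hx₁.out]) (by linarith [hy.2]) (by linarith)
  rwa [show x₁ + y + 1 + (x₂ - x₁) = x₂ + y + 1 by ring,
    show x₁ + G + 1 + (x₂ - x₁) = x₂ + G + 1 by ring] at key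

theorem stmt_13 (β γ L S G : ℝ) (hβ : 0 < β) (hγ : 0 < γ) (hL : 0 ≤ L)
    (hS : 0 < S) (hG : 0 < G) :
    AntitoneOn (fun x : ℝ =>
      (∫ y in (0:ℝ)..G, ∫ v in Ioi (L * S), y ^ β * v ^ γ *
          Real.exp (-v * (x + y + 1) / 2)) /
      (∫ v in Ioi (L * S), v ^ γ * Real.exp (-v * (x + G + 1) / 2)))
      (Ici 0) := by
  simp only [setIntegral_const_mul_rpow_mul_exp]
  exact antitoneOn_intervalIntegral_mul_tailExpIntegral_div (mul_nonneg hL hS.le)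
    (by linarith) hG.le (Real.continuous_rpow_const hβ.le).continuousOn
    fun y hy => Real.rpow_nonneg hy.1 β
end

section
/- Let α > 0, β > 0, γ > α + β + 2 and define Φ(F,G) = (∫₀^F ∫₀^G x^{α+1} y^β (x+y+1)^{-(γ+1)} dy dx)/(∫₀^F ∫₀^G x^α y^β (x+y+1)^{-(γ+1)} dy dx) for F, G > 0. Then Φ(F,G) ≤ (α+1)/(γ - α - β - 2) for all F, G > 0. -/
open MeasureTheory Set

/-- One-dimensional integration-by-parts inequality. -/
lemma ibp_aux (p t F γ : ℝ) (hp : 0 < p) (ht : 1 ≤ t) (hF : 0 < F) (hγ : 0 < γ) :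
    γ * ∫ x in (0:ℝ)..F, x ^ (p + 1) * (x + t) ^ (-(γ + 1)) ≤
    (p + 1) * ∫ x in (0:ℝ)..F, x ^ p * (x + t) ^ (-γ) := by
  have hbase : ∀ r : ℝ, ContinuousOn (fun x : ℝ => (x + t) ^ r) (Icc 0 F) := by
    intro r
    refine (continuous_id.add continuous_const).continuousOn.rpow_const fun x hx => Or.inl ?_
    exact ne_of_gt (by simp only [Pi.add_apply, id_eq]; nlinarith [hx.1])
  have hI1 : IntervalIntegrable (fun x : ℝ => x ^ p * (x + t) ^ (-γ)) volume 0 F := by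
    apply ContinuousOn.intervalIntegrable
    rw [uIcc_of_le hF.le]
    exact (continuousOn_id.rpow_const (fun x _ => Or.inr hp.le)).mul (hbase _)
  have hI2 : IntervalIntegrable (fun x : ℝ => x ^ (p + 1) * (x + t) ^ (-(γ + 1))) volume 0 F := by
    apply ContinuousOn.intervalIntegrable
    rw [uIcc_of_le hF.le]
    exact (continuousOn_id.rpow_const (fun x _ => Or.inr (by positivity))).mul (hbase _)
  set g : ℝ → ℝ := fun x => x ^ (p + 1) * (x + t) ^ (-γ) with hg
  have hderiv : ∀ x ∈ Set.uIcc (0:ℝ) F, HasDerivAt g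
      ((p + 1) * x ^ p * (x + t) ^ (-γ) + x ^ (p + 1) * ((-γ) * (x + t) ^ (-γ - 1))) x := by
    intro x hx
    rw [uIcc_of_le hF.le] at hx
    have hxt : x + t ≠ 0 := ne_of_gt (by nlinarith [hx.1])
    have h1 : HasDerivAt (fun x : ℝ => x ^ (p + 1)) ((p + 1) * x ^ p) x := by
      have := Real.hasDerivAt_rpow_const (x := x) (p := p + 1) (Or.inr (by linarith))
      simpa using this
    have h2 : HasDerivAt (fun x : ℝ => (x + t) ^ (-γ)) ((-γ) * (x + t) ^ (-γ - 1)) x := by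
      have hb : HasDerivAt (fun x : ℝ => x + t) 1 x := (hasDerivAt_id x).add_const t
      have := (Real.hasDerivAt_rpow_const (x := x + t) (p := -γ) (Or.inl hxt)).comp x hb
      exact this.congr_deriv (by ring)
    have := h1.mul h2
    exact this.congr_deriv (by ring)
  have hrw : (fun x : ℝ => (p + 1) * x ^ p * (x + t) ^ (-γ) + x ^ (p + 1) * ((-γ) * (x + t) ^ (-γ - 1)))
      = fun x : ℝ => (p + 1) * (x ^ p * (x + t) ^ (-γ)) + (-γ) * (x ^ (p + 1) * (x + t) ^ (-(γ + 1))) := by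
    funext x
    rw [show -γ - 1 = -(γ + 1) by ring]
    ring
  have hderint : IntervalIntegrable
      (fun x => (p + 1) * x ^ p * (x + t) ^ (-γ) + x ^ (p + 1) * ((-γ) * (x + t) ^ (-γ - 1)))
      volume 0 F := by
    rw [hrw]
    exact (hI1.const_mul _).add (hI2.const_mul _)
  have hftc := intervalIntegral.integral_eq_sub_of_hasDerivAt hderiv hderint
  have hgF : 0 ≤ g F := by
    apply mul_nonneg (Real.rpow_nonneg hF.le _) (Real.rpow_nonneg (by nlinarith) _)
  have hg0 : g 0 = 0 := by
    simp [hg, Real.zero_rpow (by positivity : p + 1 ≠ 0)]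
  have hsplit : (∫ x in (0:ℝ)..F,
      ((p + 1) * x ^ p * (x + t) ^ (-γ) + x ^ (p + 1) * ((-γ) * (x + t) ^ (-γ - 1))))
      = (p + 1) * (∫ x in (0:ℝ)..F, x ^ p * (x + t) ^ (-γ))
        + (-γ) * (∫ x in (0:ℝ)..F, x ^ (p + 1) * (x + t) ^ (-(γ + 1))) := by
    rw [hrw, intervalIntegral.integral_add (hI1.const_mul _) (hI2.const_mul _),
      intervalIntegral.integral_const_mul, intervalIntegral.integral_const_mul]
  have key : 0 ≤ (p + 1) * (∫ x in (0:ℝ)..F, x ^ p * (x + t) ^ (-γ))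
        + (-γ) * (∫ x in (0:ℝ)..F, x ^ (p + 1) * (x + t) ^ (-(γ + 1))) := by
    rw [← hsplit, hftc, hg0, sub_zero]; exact hgF
  linarith

theorem stmt_19 (α β γ : ℝ) (hα : 0 < α) (hβ : 0 < β) (hγ : γ > α + β + 2)
    (F G : ℝ) (hF : 0 < F) (hG : 0 < G) :
    (∫ x in (0:ℝ)..F, ∫ y in (0:ℝ)..G, x ^ (α + 1) * y ^ β * (x + y + 1) ^ (-(γ + 1))) /
      (∫ x in (0:ℝ)..F, ∫ y in (0:ℝ)..G, x ^ α * y ^ β * (x + y + 1) ^ (-(γ + 1))) ≤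
      (α + 1) / (γ - α - β - 2) := by
  have hγ0 : (0:ℝ) < γ := by linarith
  set μ : Measure (ℝ × ℝ) :=
    (volume.restrict (Ioc 0 F)).prod (volume.restrict (Ioc 0 G)) with hμ
  have hInt : ∀ a b r : ℝ, 0 < a → 0 < b →
      Integrable (fun q : ℝ × ℝ => q.1 ^ a * q.2 ^ b * (q.1 + q.2 + 1) ^ (-r)) μ := by
    intro a b r ha hb
    rw [hμ, Measure.prod_restrict]
    have hsub : (Ioc 0 F ×ˢ Ioc 0 G : Set (ℝ × ℝ)) ⊆ Icc 0 F ×ˢ Icc 0 G := fun q hq =>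
      ⟨⟨hq.1.1.le, hq.1.2⟩, ⟨hq.2.1.le, hq.2.2⟩⟩
    apply IntegrableOn.mono_set _ hsub
    apply ContinuousOn.integrableOn_compact (IsCompact.prod isCompact_Icc isCompact_Icc)
    apply ContinuousOn.mul
    apply ContinuousOn.mul
    · exact (continuous_fst.continuousOn).rpow_const (fun q _ => Or.inr ha.le)
    · exact (continuous_snd.continuousOn).rpow_const (fun q _ => Or.inr hb.le)
    · refine ((continuous_fst.add continuous_snd).add continuous_const).continuousOn.rpow_const
        (fun q hq => Or.inl (ne_of_gt ?_))
      have := hq.1.1; have := hq.2.1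
      simp only [Pi.add_apply] at *
      nlinarith
  have hN : Integrable (fun q : ℝ × ℝ => q.1 ^ (α+1) * q.2 ^ β * (q.1+q.2+1) ^ (-(γ+1))) μ :=
    hInt (α+1) β (γ+1) (by linarith) hβ
  have hM : Integrable (fun q : ℝ × ℝ => q.1 ^ α * q.2 ^ (β+1) * (q.1+q.2+1) ^ (-(γ+1))) μ :=
    hInt α (β+1) (γ+1) hα (by linarith)
  have hD : Integrable (fun q : ℝ × ℝ => q.1 ^ α * q.2 ^ β * (q.1+q.2+1) ^ (-(γ+1))) μ :=
    hInt α β (γ+1) hα hβ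
  have hS : Integrable (fun q : ℝ × ℝ => q.1 ^ α * q.2 ^ β * (q.1+q.2+1) ^ (-γ)) μ :=
    hInt α β γ hα hβ
  set N := ∫ q : ℝ × ℝ, q.1 ^ (α+1) * q.2 ^ β * (q.1+q.2+1) ^ (-(γ+1)) ∂μ with hNdef
  set M := ∫ q : ℝ × ℝ, q.1 ^ α * q.2 ^ (β+1) * (q.1+q.2+1) ^ (-(γ+1)) ∂μ with hMdef
  set D := ∫ q : ℝ × ℝ, q.1 ^ α * q.2 ^ β * (q.1+q.2+1) ^ (-(γ+1)) ∂μ with hDdef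
  set S := ∫ q : ℝ × ℝ, q.1 ^ α * q.2 ^ β * (q.1+q.2+1) ^ (-γ) ∂μ with hSdef
  have hae : ∀ᵐ q ∂μ, q ∈ Ioc (0:ℝ) F ×ˢ Ioc (0:ℝ) G := by
    rw [hμ, Measure.prod_restrict]
    exact ae_restrict_mem ((measurableSet_Ioc).prod measurableSet_Ioc)
  -- relate the statement's iterated interval integrals to the product integrals
  have hiter : ∀ a b r : ℝ, 0 < a → 0 < b →
      (∫ x in (0:ℝ)..F, ∫ y in (0:ℝ)..G, x ^ a * y ^ b * (x + y + 1) ^ (-r))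
        = ∫ q : ℝ × ℝ, q.1 ^ a * q.2 ^ b * (q.1+q.2+1) ^ (-r) ∂μ := by
    intro a b r ha hb
    rw [MeasureTheory.integral_prod _ (hInt a b r ha hb)]
    rw [intervalIntegral.integral_of_le hF.le]
    apply setIntegral_congr_fun measurableSet_Ioc
    intro x _
    dsimp only
    rw [intervalIntegral.integral_of_le hG.le]
  -- Claim A : γ * N ≤ (α+1) * S
  have claimA : γ * N ≤ (α + 1) * S := by
    rw [hNdef, hSdef, MeasureTheory.integral_prod_symm _ hN,
      MeasureTheory.integral_prod_symm _ hS,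
      ← MeasureTheory.integral_const_mul, ← MeasureTheory.integral_const_mul]
    apply setIntegral_mono_on
    · exact ((hN.const_mul γ).integral_prod_right).congr (by
        filter_upwards with y
        rw [MeasureTheory.integral_const_mul])
    · exact ((hS.const_mul (α+1)).integral_prod_right).congr (by
        filter_upwards with y
        rw [MeasureTheory.integral_const_mul])
    · exact measurableSet_Ioc
    · intro y hy
      dsimp only
      have h1 : (∫ x in Ioc (0:ℝ) F, x ^ (α+1) * y ^ β * (x + y + 1) ^ (-(γ+1)))
          = y ^ β * ∫ x in Ioc (0:ℝ) F, x ^ (α+1) * (x + (y+1)) ^ (-(γ+1)) := by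
        rw [← MeasureTheory.integral_const_mul]
        apply setIntegral_congr_fun measurableSet_Ioc
        intro x _
        dsimp only
        rw [show x + y + 1 = x + (y + 1) by ring]
        ring
      have h2 : (∫ x in Ioc (0:ℝ) F, x ^ α * y ^ β * (x + y + 1) ^ (-γ))
          = y ^ β * ∫ x in Ioc (0:ℝ) F, x ^ α * (x + (y+1)) ^ (-γ) := by
        rw [← MeasureTheory.integral_const_mul]
        apply setIntegral_congr_fun measurableSet_Ioc
        intro x _
        dsimp only
        rw [show x + y + 1 = x + (y + 1) by ring]
        ring
      rw [h1, h2]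
      have hyb : (0:ℝ) ≤ y ^ β := Real.rpow_nonneg hy.1.le _
      have hkey := ibp_aux α (y+1) F γ hα (by linarith [hy.1]) hF hγ0
      rw [intervalIntegral.integral_of_le hF.le, intervalIntegral.integral_of_le hF.le] at hkey
      calc γ * (y ^ β * ∫ x in Ioc (0:ℝ) F, x ^ (α+1) * (x + (y+1)) ^ (-(γ+1)))
          = y ^ β * (γ * ∫ x in Ioc (0:ℝ) F, x ^ (α+1) * (x + (y+1)) ^ (-(γ+1))) := by ring
        _ ≤ y ^ β * ((α+1) * ∫ x in Ioc (0:ℝ) F, x ^ α * (x + (y+1)) ^ (-γ)) :=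
            mul_le_mul_of_nonneg_left hkey hyb
        _ = (α+1) * (y ^ β * ∫ x in Ioc (0:ℝ) F, x ^ α * (x + (y+1)) ^ (-γ)) := by ring
  -- Claim B : γ * M ≤ (β+1) * S
  have claimB : γ * M ≤ (β + 1) * S := by
    rw [hMdef, hSdef, MeasureTheory.integral_prod _ hM,
      MeasureTheory.integral_prod _ hS,
      ← MeasureTheory.integral_const_mul, ← MeasureTheory.integral_const_mul]
    apply setIntegral_mono_on
    · exact ((hM.const_mul γ).integral_prod_left).congr (by
        filter_upwards with x
        rw [MeasureTheory.integral_const_mul])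
    · exact ((hS.const_mul (β+1)).integral_prod_left).congr (by
        filter_upwards with x
        rw [MeasureTheory.integral_const_mul])
    · exact measurableSet_Ioc
    · intro x hx
      dsimp only
      have h1 : (∫ y in Ioc (0:ℝ) G, x ^ α * y ^ (β+1) * (x + y + 1) ^ (-(γ+1)))
          = x ^ α * ∫ y in Ioc (0:ℝ) G, y ^ (β+1) * (y + (x+1)) ^ (-(γ+1)) := by
        rw [← MeasureTheory.integral_const_mul]
        apply setIntegral_congr_fun measurableSet_Ioc
        intro y _
        dsimp only
        rw [show x + y + 1 = y + (x + 1) by ring]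
        ring
      have h2 : (∫ y in Ioc (0:ℝ) G, x ^ α * y ^ β * (x + y + 1) ^ (-γ))
          = x ^ α * ∫ y in Ioc (0:ℝ) G, y ^ β * (y + (x+1)) ^ (-γ) := by
        rw [← MeasureTheory.integral_const_mul]
        apply setIntegral_congr_fun measurableSet_Ioc
        intro y _
        dsimp only
        rw [show x + y + 1 = y + (x + 1) by ring]
        ring
      rw [h1, h2]
      have hxa : (0:ℝ) ≤ x ^ α := Real.rpow_nonneg hx.1.le _
      have hkey := ibp_aux β (x+1) G γ hβ (by linarith [hx.1]) hG hγ0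
      rw [intervalIntegral.integral_of_le hG.le, intervalIntegral.integral_of_le hG.le] at hkey
      calc γ * (x ^ α * ∫ y in Ioc (0:ℝ) G, y ^ (β+1) * (y + (x+1)) ^ (-(γ+1)))
          = x ^ α * (γ * ∫ y in Ioc (0:ℝ) G, y ^ (β+1) * (y + (x+1)) ^ (-(γ+1))) := by ring
        _ ≤ x ^ α * ((β+1) * ∫ y in Ioc (0:ℝ) G, y ^ β * (y + (x+1)) ^ (-γ)) :=
            mul_le_mul_of_nonneg_left hkey hxa
        _ = (β+1) * (x ^ α * ∫ y in Ioc (0:ℝ) G, y ^ β * (y + (x+1)) ^ (-γ)) := by ring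
  -- Claim C : S = N + M + D
  have claimC : S = N + M + D := by
    have heq : ∀ᵐ q ∂μ, q.1 ^ α * q.2 ^ β * (q.1+q.2+1) ^ (-γ)
        = q.1 ^ (α+1) * q.2 ^ β * (q.1+q.2+1) ^ (-(γ+1))
          + q.1 ^ α * q.2 ^ (β+1) * (q.1+q.2+1) ^ (-(γ+1))
          + q.1 ^ α * q.2 ^ β * (q.1+q.2+1) ^ (-(γ+1)) := by
      filter_upwards [hae] with q hq
      have hx : (0:ℝ) < q.1 := hq.1.1
      have hy : (0:ℝ) < q.2 := hq.2.1
      have hb : (0:ℝ) < q.1 + q.2 + 1 := by linarith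
      have e1 : (q.1+q.2+1) ^ (-γ) = (q.1+q.2+1) ^ (-(γ+1)) * (q.1+q.2+1) := by
        rw [show (-γ) = -(γ+1) + 1 by ring, Real.rpow_add_one hb.ne']
      have e2 : q.1 ^ (α+1) = q.1 ^ α * q.1 := Real.rpow_add_one hx.ne' α
      have e3 : q.2 ^ (β+1) = q.2 ^ β * q.2 := Real.rpow_add_one hy.ne' β
      rw [e1, e2, e3]; ring
    have h12 : Integrable (fun q : ℝ × ℝ =>
        q.1 ^ (α+1) * q.2 ^ β * (q.1+q.2+1) ^ (-(γ+1))
          + q.1 ^ α * q.2 ^ (β+1) * (q.1+q.2+1) ^ (-(γ+1))) μ := hN.add hM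
    rw [hSdef, integral_congr_ae heq, MeasureTheory.integral_add h12 hD,
      MeasureTheory.integral_add hN hM]
  -- nonnegativity / positivity
  have hbasepos : ∀ a b r : ℝ, ∀ q : ℝ × ℝ, q ∈ Ioc (0:ℝ) F ×ˢ Ioc (0:ℝ) G →
      0 < q.1 ^ a * q.2 ^ b * (q.1+q.2+1) ^ (-r) := by
    intro a b r q hq
    have hx : (0:ℝ) < q.1 := hq.1.1
    have hy : (0:ℝ) < q.2 := hq.2.1
    have : (0:ℝ) < q.1 + q.2 + 1 := by linarith
    positivity
  have hNnn : 0 ≤ N := by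
    rw [hNdef]
    apply MeasureTheory.integral_nonneg_of_ae
    filter_upwards [hae] with q hq
    exact (hbasepos _ _ _ q hq).le
  have hDpos : 0 < D := by
    rw [hDdef, hμ, Measure.prod_restrict]
    have hmeas : MeasurableSet (Ioc (0:ℝ) F ×ˢ Ioc (0:ℝ) G) :=
      (measurableSet_Ioc).prod measurableSet_Ioc
    rw [setIntegral_pos_iff_support_of_nonneg_ae]
    · have hsupp : (Ioc (0:ℝ) F ×ˢ Ioc (0:ℝ) G) ⊆
          Function.support (fun q : ℝ × ℝ => q.1 ^ α * q.2 ^ β * (q.1+q.2+1) ^ (-(γ+1))) :=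
        fun q hq => (hbasepos α β (γ+1) q hq).ne'
      have heqset : (Function.support (fun q : ℝ × ℝ => q.1 ^ α * q.2 ^ β * (q.1+q.2+1) ^ (-(γ+1))))
          ∩ (Ioc (0:ℝ) F ×ˢ Ioc (0:ℝ) G) = Ioc (0:ℝ) F ×ˢ Ioc (0:ℝ) G :=
        inter_eq_self_of_subset_right hsupp
      rw [heqset, Measure.prod_prod, Real.volume_Ioc, Real.volume_Ioc]
      exact ENNReal.mul_pos (by simp [hF]) (by simp [hG])
    · filter_upwards [ae_restrict_mem hmeas] with q hq
      exact (hbasepos _ _ _ q hq).le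
    · have := hD
      rwa [hμ, Measure.prod_restrict] at this
  -- final arithmetic
  rw [hiter (α+1) β (γ+1) (by linarith) hβ, hiter α β (γ+1) hα hβ, ← hNdef, ← hDdef]
  have hgab : (0:ℝ) < γ - α - β - 2 := by linarith
  have hSle : (γ - α - β - 2) * S ≤ γ * D := by nlinarith [claimC]
  have hNle : N * (γ - α - β - 2) ≤ (α + 1) * D := by
    have h1 : γ * ((γ - α - β - 2) * N) ≤ γ * ((α+1) * D) := by
      calc γ * ((γ - α - β - 2) * N) = (γ - α - β - 2) * (γ * N) := by ring
        _ ≤ (γ - α - β - 2) * ((α + 1) * S) := mul_le_mul_of_nonneg_left claimA hgab.le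
        _ = (α + 1) * ((γ - α - β - 2) * S) := by ring
        _ ≤ (α + 1) * (γ * D) := mul_le_mul_of_nonneg_left hSle (by linarith)
        _ = γ * ((α+1) * D) := by ring
    have := le_of_mul_le_mul_left h1 hγ0
    linarith
  rw [div_le_div_iff₀ hDpos hgab]
  exact hNle
end
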